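/- Let η ≪ λ. If (π₁,π₂) and (π₁′,π₂′) are pairs of stationary Markov policies with π_i(·|x)=π_i′(·|x) for λ-almost every x (i=1,2), then the occupation measures coincide: μ_{η,π₁,π₂} = μ_{η,π₁′,π₂′}. -/

import Mathlib

open MeasureTheory ProbabilityTheory
open scoped NNReal ENNReal

/-- One-step transition operator on measures for the pair of stationary Markov policies
`(π₁, π₂)`:  `γ ↦ γ Q_{π₁,π₂}` where `Q_{π₁,π₂}(D|x) = ∫ Q(D|x,a₁,a₂) π₁(da₁|x) π₂(da₂|x)`. -/
noncomputable def gstep {X A₁ A₂ : Type*} [MeasurableSpace X] [MeasurableSpace A₁]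
    [MeasurableSpace A₂] (Q : Kernel (X × A₁ × A₂) X)
    (π₁ : Kernel X A₁) (π₂ : Kernel X A₂) (γ : Measure X) : Measure X :=
  γ.bind fun x => ((π₁ ×ₖ π₂) x).bind fun a => Q (x, a)

/-- The `X`-marginal of the occupation measure of the pair of stationary Markov policies
`(π₁, π₂)` with initial distribution `η`: `(1-β) ∑_t β^t η Q^t_{π₁,π₂}`. -/
noncomputable def occX {X A₁ A₂ : Type*} [MeasurableSpace X] [MeasurableSpace A₁]
    [MeasurableSpace A₂] (β : ℝ≥0) (Q : Kernel (X × A₁ × A₂) X)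
    (π₁ : Kernel X A₁) (π₂ : Kernel X A₂) (η : Measure X) : Measure X :=
  Measure.sum fun t : ℕ => ((1 - β) * β ^ t) • (gstep Q π₁ π₂)^[t] η

/-- The occupation measure on `X × A₁ × A₂` of the pair of stationary Markov policies
`(π₁, π₂)`: its `X`-marginal is `occX` and it disintegrates as
`μ(dy,da₁,da₂) = π₁(da₁|y) π₂(da₂|y) μ^X(dy)`. -/
noncomputable def occ {X A₁ A₂ : Type*} [MeasurableSpace X] [MeasurableSpace A₁]
    [MeasurableSpace A₂] (β : ℝ≥0) (Q : Kernel (X × A₁ × A₂) X)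
    (π₁ : Kernel X A₁) (π₂ : Kernel X A₂) (η : Measure X) : Measure (X × A₁ × A₂) :=
  (occX β Q π₁ π₂ η) ⊗ₘ (π₁ ×ₖ π₂)

/-!
Every measure reached from `η` by the transition operator is absolutely continuous with respect
to `λ`, since each step mixes laws `Q(·|x,a) ≪ λ`. So the `λ`-null set where the policies differ
is never charged: both pairs of policies produce the same iterates, hence the same `X`-marginal,
and they agree almost everywhere for that marginal, so the disintegrations coincide.
-/

theorem MeasureTheory.Measure.bind_absolutelyContinuous {α β : Type*} [MeasurableSpace α]
    [MeasurableSpace β] {m : Measure α} {f : α → Measure β} {ν : Measure β}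
    (h : ∀ a, f a ≪ ν) : m.bind f ≪ ν :=
  .mk fun s hs hνs => nonpos_iff_eq_zero.1 <|
    (Measure.bind_apply_le f hs).trans_eq (by simp [h _ hνs])

theorem ProbabilityTheory.Kernel.prod_ae_eq_prod {α β γ : Type*} [MeasurableSpace α]
    [MeasurableSpace β] [MeasurableSpace γ] {μ : Measure α}
    {κ κ' : Kernel α β} [IsSFiniteKernel κ] [IsSFiniteKernel κ']
    {η η' : Kernel α γ} [IsSFiniteKernel η] [IsSFiniteKernel η']
    (hκ : ∀ᵐ a ∂μ, κ a = κ' a) (hη : ∀ᵐ a ∂μ, η a = η' a) :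
    ∀ᵐ a ∂μ, (κ ×ₖ η) a = (κ' ×ₖ η') a := by
  filter_upwards [hκ, hη] with a hκa hηa
  rw [Kernel.prod_apply, Kernel.prod_apply, hκa, hηa]

section OccupationMeasure

variable {X A₁ A₂ : Type*} [MeasurableSpace X] [MeasurableSpace A₁] [MeasurableSpace A₂]
  {Q : Kernel (X × A₁ × A₂) X} {lam : Measure X}

theorem gstep_absolutelyContinuous (hQ : ∀ p, Q p ≪ lam) (π₁ : Kernel X A₁) (π₂ : Kernel X A₂)
    (γ : Measure X) : gstep Q π₁ π₂ γ ≪ lam :=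
  Measure.bind_absolutelyContinuous fun _ => Measure.bind_absolutelyContinuous fun _ => hQ _

theorem gstep_iterate_absolutelyContinuous (hQ : ∀ p, Q p ≪ lam) (π₁ : Kernel X A₁)
    (π₂ : Kernel X A₂) {η : Measure X} (hη : η ≪ lam) (t : ℕ) :
    (gstep Q π₁ π₂)^[t] η ≪ lam := by
  cases t with
  | zero => exact hη
  | succ t =>
    rw [Function.iterate_succ_apply']
    exact gstep_absolutelyContinuous hQ π₁ π₂ _

theorem occX_absolutelyContinuous (hQ : ∀ p, Q p ≪ lam) (β : ℝ≥0) (π₁ : Kernel X A₁)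
    (π₂ : Kernel X A₂) {η : Measure X} (hη : η ≪ lam) : occX β Q π₁ π₂ η ≪ lam :=
  Measure.absolutelyContinuous_sum_left fun t =>
    (gstep_iterate_absolutelyContinuous hQ π₁ π₂ hη t).smul_left _

variable {π₁ π₁' : Kernel X A₁} [IsSFiniteKernel π₁] [IsSFiniteKernel π₁']
  {π₂ π₂' : Kernel X A₂} [IsSFiniteKernel π₂] [IsSFiniteKernel π₂']

theorem gstep_congr_of_absolutelyContinuous {γ : Measure X} (hγ : γ ≪ lam)
    (h1 : ∀ᵐ x ∂lam, π₁ x = π₁' x) (h2 : ∀ᵐ x ∂lam, π₂ x = π₂' x) :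
    gstep Q π₁ π₂ γ = gstep Q π₁' π₂' γ :=
  Measure.bind_congr_right <|
    (Kernel.prod_ae_eq_prod (hγ.ae_le h1) (hγ.ae_le h2)).mono fun x hx => by simp only [hx]

theorem gstep_iterate_congr (hQ : ∀ p, Q p ≪ lam) {η : Measure X} (hη : η ≪ lam)
    (h1 : ∀ᵐ x ∂lam, π₁ x = π₁' x) (h2 : ∀ᵐ x ∂lam, π₂ x = π₂' x) (t : ℕ) :
    (gstep Q π₁ π₂)^[t] η = (gstep Q π₁' π₂')^[t] η := by
  induction t with
  | zero => simp only [Function.iterate_zero_apply]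
  | succ t ih =>
    rw [Function.iterate_succ_apply', Function.iterate_succ_apply', ← ih]
    exact gstep_congr_of_absolutelyContinuous
      (gstep_iterate_absolutelyContinuous hQ π₁ π₂ hη t) h1 h2

end OccupationMeasure

theorem stmt9_general {X A₁ A₂ : Type*} [MeasurableSpace X] [MeasurableSpace A₁] [MeasurableSpace A₂]
    (β : ℝ≥0) (lam η : Measure X) (Q : Kernel (X × A₁ × A₂) X)
    (hQ : ∀ p, Q p ≪ lam)
    (π₁ π₁' : Kernel X A₁) [IsMarkovKernel π₁] [IsMarkovKernel π₁']
    (π₂ π₂' : Kernel X A₂) [IsMarkovKernel π₂] [IsMarkovKernel π₂']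
    (hη : η ≪ lam)
    (h1 : ∀ᵐ x ∂lam, π₁ x = π₁' x) (h2 : ∀ᵐ x ∂lam, π₂ x = π₂' x) :
    occ β Q π₁ π₂ η = occ β Q π₁' π₂' η := by
  have hoccX : occX β Q π₁ π₂ η = occX β Q π₁' π₂' η := by
    unfold occX
    simp_rw [gstep_iterate_congr hQ hη h1 h2]
  have hac := occX_absolutelyContinuous hQ β π₁ π₂ hη
  rw [occ, occ, ← hoccX]
  exact Measure.compProd_congr (Kernel.prod_ae_eq_prod (hac.ae_le h1) (hac.ae_le h2))

/-- If `η ≪ λ`, the transitions are absolutely continuous w.r.t. `λ`, and the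
stationary Markov policies satisfy `πᵢ(·|x) = πᵢ'(·|x)` for `λ`-a.e. `x` (`i = 1,2`), then the
occupation measures coincide: `μ_{η,π₁,π₂} = μ_{η,π₁',π₂'}`. -/
theorem stmt9 {X A₁ A₂ : Type*} [MeasurableSpace X]
    [MetricSpace A₁] [CompactSpace A₁] [MeasurableSpace A₁] [BorelSpace A₁]
    [MetricSpace A₂] [CompactSpace A₂] [MeasurableSpace A₂] [BorelSpace A₂]
    (β : ℝ≥0) (hβ0 : 0 < β) (hβ1 : β < 1)
    (lam η : Measure X) [IsProbabilityMeasure lam] [IsProbabilityMeasure η]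
    (Q : Kernel (X × A₁ × A₂) X) [IsMarkovKernel Q]
    (hQ : ∀ p, Q p ≪ lam)
    (π₁ π₁' : Kernel X A₁) [IsMarkovKernel π₁] [IsMarkovKernel π₁']
    (π₂ π₂' : Kernel X A₂) [IsMarkovKernel π₂] [IsMarkovKernel π₂']
    (hη : η ≪ lam)
    (h1 : ∀ᵐ x ∂lam, π₁ x = π₁' x) (h2 : ∀ᵐ x ∂lam, π₂ x = π₂' x) :
    occ β Q π₁ π₂ η = occ β Q π₁' π₂' η :=
  stmt9_general β lam η Q hQ π₁ π₁' π₂ π₂' hη h1 h2
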